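/- Let k be a perfect field of characteristic p > 0 and W = W(k). A φ-gauge (M, f, v, φ) over W of finite type, concentrated in an interval [a,b], is isomorphic (as a φ-gauge, i.e., via a family of W-module isomorphisms commuting with f, v and φ) to the φ-gauge associated to some virtual crystal over k if and only if the underlying W-gauge (M, f, v) is free. -/

import Mathlib

open Pointwise

universe u v

/-- A gauge over a commutative ring `R` (for the prime `p`). -/
structure GaugeData (R : Type u) [CommRing R] (p : ℕ) : Type (max u (v + 1)) where
  M : ℤ → Type v
  [acg : ∀ r, AddCommGroup (M r)]
  [mod : ∀ r, Module R (M r)]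
  f : ∀ r : ℤ, M r →ₗ[R] M (r + 1)
  v : ∀ r : ℤ, M (r + 1) →ₗ[R] M r
  fv : ∀ (r : ℤ) (x : M (r + 1)), f r (v r x) = (p : R) • x
  vf : ∀ (r : ℤ) (x : M r), v r (f r x) = (p : R) • x

attribute [instance] GaugeData.acg GaugeData.mod

variable {R : Type u} [CommRing R] {p : ℕ}

/-- Transport along an equality of indices. -/
def GaugeData.cast (G : GaugeData R p) {r s : ℤ} (h : r = s) : G.M r ≃ₗ[R] G.M s := by
  subst h; exact LinearEquiv.refl R (G.M r)

/-- Iterated `f` : `M r → M (r + a)`. -/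
def GaugeData.fpow (G : GaugeData R p) : (a : ℕ) → (r : ℤ) → (G.M r →ₗ[R] G.M (r + a))
  | 0, r => (G.cast (by simp)).toLinearMap
  | a + 1, r =>
      (G.cast (show r + 1 + (a : ℕ) = r + ((a + 1 : ℕ) : ℤ) by push_cast; ring)).toLinearMap
        ∘ₗ (G.fpow a (r + 1)) ∘ₗ (G.f r)

/-- Iterated `v` : `M r → M (r - b)`. -/
def GaugeData.vpow (G : GaugeData R p) : (b : ℕ) → (r : ℤ) → (G.M r →ₗ[R] G.M (r - b))
  | 0, r => (G.cast (by simp)).toLinearMap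
  | b + 1, r =>
      (G.cast (show r - 1 - (b : ℕ) = r - ((b + 1 : ℕ) : ℤ) by push_cast; ring)).toLinearMap
        ∘ₗ (G.vpow b (r - 1)) ∘ₗ (G.v (r - 1))
        ∘ₗ (G.cast (show r = r - 1 + 1 by ring)).toLinearMap

/-- The generating set in degree `n` determined by homogeneous elements `m i`. -/
def GaugeData.genSet (G : GaugeData R p) {s : ℕ} (d : Fin s → ℤ) (m : ∀ i, G.M (d i))
    (n : ℤ) : Set (G.M n) :=
  {y | ∃ (i : Fin s) (a : ℕ) (h : d i + a = n), y = G.cast h (G.fpow a (d i) (m i))} ∪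
    {y | ∃ (i : Fin s) (b : ℕ) (h : d i - b = n), y = G.cast h (G.vpow b (d i) (m i))}

/-- The homogeneous elements `m i` generate the gauge `G`. -/
def GaugeData.Generates (G : GaugeData R p) {s : ℕ} (d : Fin s → ℤ)
    (m : ∀ i, G.M (d i)) : Prop :=
  ∀ (n : ℤ) (x : G.M n), x ∈ Submodule.span R (G.genSet d m n)

/-- A gauge is of finite type if finitely many homogeneous elements generate it. -/
def GaugeData.IsFiniteType (G : GaugeData R p) : Prop :=
  ∃ (s : ℕ) (d : Fin s → ℤ) (m : ∀ i, G.M (d i)), G.Generates d m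

/-- A gauge is concentrated in the interval `[a, b]`. -/
def GaugeData.ConcentratedIn (G : GaugeData R p) (a b : ℤ) : Prop :=
  (∀ r : ℤ, r + 1 ≤ a → Function.Bijective (G.v r)) ∧
    (∀ r : ℤ, b ≤ r → Function.Bijective (G.f r))

section Crystal

variable (p) [hp : Fact p.Prime] (k : Type) [Field k] [CharP k p] [PerfectRing k p]

variable (D : Type) [AddCommGroup D] [Module (FractionRing (WittVector p k)) D]
  [Module (WittVector p k) D] [IsScalarTower (WittVector p k) (FractionRing (WittVector p k)) D]
  (ϕ : D → D) (M : Submodule (WittVector p k) D)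

/-- The degree-`r` component `M^r = {m ∈ M : ϕ(m) ∈ pʳ·M}` of the gauge associated to a
virtual crystal `(D, ϕ, M)`. -/
def crystalComponentSet (r : ℤ) : Set D :=
  {x | x ∈ M ∧ ϕ x ∈ (p : FractionRing (WittVector p k)) ^ r • (M : Set D)}

/-- `M^r` as a `W(k)`-submodule of `D` (given that `ϕ` is additive and `σ`-semilinear,
where `σB` is induced by the Witt-vector Frobenius). -/
def crystalComponent
    (σB : FractionRing (WittVector p k) ≃+* FractionRing (WittVector p k))
    (hσB : ∀ w : WittVector p k,
      σB (algebraMap (WittVector p k) (FractionRing (WittVector p k)) w) =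
        algebraMap (WittVector p k) (FractionRing (WittVector p k))
          (WittVector.frobeniusEquiv p k w))
    (hadd : ∀ x y : D, ϕ (x + y) = ϕ x + ϕ y)
    (hsemi : ∀ (c : FractionRing (WittVector p k)) (x : D), ϕ (c • x) = σB c • ϕ x)
    (r : ℤ) : Submodule (WittVector p k) D where
  carrier := crystalComponentSet p k D ϕ M r
  add_mem' := by
    rintro x y ⟨hxM, hx⟩ ⟨hyM, hy⟩
    obtain ⟨m1, hm1, hx⟩ := Set.mem_smul_set.mp hx
    obtain ⟨m2, hm2, hy⟩ := Set.mem_smul_set.mp hy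
    exact ⟨M.add_mem hxM hyM, Set.mem_smul_set.mpr
      ⟨m1 + m2, M.add_mem hm1 hm2, by rw [smul_add, hx, hy, hadd]⟩⟩
  zero_mem' := by
    have h0 : ϕ 0 = 0 := by
      have h := hadd 0 0
      rw [add_zero] at h
      first | exact (left_eq_add.mp h) | simpa using h
    exact ⟨M.zero_mem, Set.mem_smul_set.mpr ⟨0, M.zero_mem, by rw [smul_zero, h0]⟩⟩
  smul_mem' := by
    rintro c x ⟨hxM, hx⟩
    obtain ⟨m1, hm1, hx⟩ := Set.mem_smul_set.mp hx
    refine ⟨M.smul_mem c hxM, Set.mem_smul_set.mpr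
      ⟨(WittVector.frobeniusEquiv p k c) • m1, M.smul_mem _ hm1, ?_⟩⟩
    have h1 : c • x = (algebraMap (WittVector p k) (FractionRing (WittVector p k)) c) • x :=
      (algebraMap_smul (FractionRing (WittVector p k)) c x).symm
    have h2 : ϕ (c • x) = (p : FractionRing (WittVector p k)) ^ r •
        ((WittVector.frobeniusEquiv p k c) • m1) := by
      rw [h1, hsemi, hσB, ← hx, smul_comm, algebraMap_smul]
    exact h2.symm

/-- The gauge associated to a virtual crystal `(D, ϕ, M)`: the components are the
`M^r = {m ∈ M : ϕ(m) ∈ pʳ·M}`, `f` is multiplication by `p` and `v` is the inclusion. -/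
noncomputable def crystalGauge
    (σB : FractionRing (WittVector p k) ≃+* FractionRing (WittVector p k))
    (hσB : ∀ w : WittVector p k,
      σB (algebraMap (WittVector p k) (FractionRing (WittVector p k)) w) =
        algebraMap (WittVector p k) (FractionRing (WittVector p k))
          (WittVector.frobeniusEquiv p k w))
    (hadd : ∀ x y : D, ϕ (x + y) = ϕ x + ϕ y)
    (hsemi : ∀ (c : FractionRing (WittVector p k)) (x : D), ϕ (c • x) = σB c • ϕ x) :
    GaugeData (WittVector p k) p where
  M r := ↥(crystalComponent p k D ϕ M σB hσB hadd hsemi r)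
  f r := LinearMap.codRestrict (crystalComponent p k D ϕ M σB hσB hadd hsemi (r + 1))
    ((p : WittVector p k) • (crystalComponent p k D ϕ M σB hσB hadd hsemi r).subtype)
    (by
      rintro ⟨x, hxM, hx⟩
      obtain ⟨m1, hm1, hx⟩ := Set.mem_smul_set.mp hx
      simp only [LinearMap.smul_apply, Submodule.subtype_apply]
      have h1 : (p : WittVector p k) • x = ((p : FractionRing (WittVector p k)) • x : D) := by
        rw [← algebraMap_smul (FractionRing (WittVector p k))
          ((p : ℕ) : WittVector p k) x, map_natCast]
      refine ⟨M.smul_mem _ hxM, Set.mem_smul_set.mpr ⟨m1, hm1, ?_⟩⟩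
      rw [h1, hsemi, map_natCast, ← hx, smul_smul]
      congr 1
      rw [zpow_add_one₀ (WittVector.FractionRing.p_nonzero p k), mul_comm])
  v r := LinearMap.codRestrict (crystalComponent p k D ϕ M σB hσB hadd hsemi r)
    ((crystalComponent p k D ϕ M σB hσB hadd hsemi (r + 1)).subtype)
    (by
      rintro ⟨x, hxM, hx⟩
      obtain ⟨m1, hm1, hx⟩ := Set.mem_smul_set.mp hx
      simp only [Submodule.subtype_apply]
      refine ⟨hxM, Set.mem_smul_set.mpr ⟨(p : WittVector p k) • m1, M.smul_mem _ hm1, ?_⟩⟩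
      have h1 : (p : WittVector p k) • m1 = ((p : FractionRing (WittVector p k)) • m1 : D) := by
        rw [← algebraMap_smul (FractionRing (WittVector p k))
          ((p : ℕ) : WittVector p k) m1, map_natCast]
      rw [h1, ← hx, smul_smul]
      congr 1
      rw [zpow_add_one₀ (WittVector.FractionRing.p_nonzero p k)])
  fv := by
    intro r x
    apply Subtype.ext
    simp
  vf := by
    intro r x
    apply Subtype.ext
    simp

end Crystal

/-- The direct sum of a finite family of gauges. -/
def gaugeDirectSum {ι : Type} [Fintype ι] (G : ι → GaugeData R p) : GaugeData R p where
  M r := ∀ i, (G i).M r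
  f r := LinearMap.pi fun i => (G i).f r ∘ₗ LinearMap.proj i
  v r := LinearMap.pi fun i => (G i).v r ∘ₗ LinearMap.proj i
  fv := by
    intro r x
    funext i
    simpa using (G i).fv r (x i)
  vf := by
    intro r x
    funext i
    simpa using (G i).vf r (x i)

/-- An isomorphism of gauges: a family of linear equivalences commuting with `f` and `v`. -/
def GaugeData.IsoTo (G G' : GaugeData R p) : Prop :=
  ∃ e : ∀ r : ℤ, G.M r ≃ₗ[R] G'.M r,
    (∀ (r : ℤ) (x : G.M r), e (r + 1) (G.f r x) = G'.f r (e r x)) ∧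
      (∀ (r : ℤ) (x : G.M (r + 1)), e r (G.v r x) = G'.v r (e (r + 1) x))

/-- The standard free gauge of degree `d` over the Witt vectors `W`: all components are `W`,
`f` is the identity in degrees `≥ d` and multiplication by `p` below, and `v : M^{r+1} → M^r`
is multiplication by `p` for `r ≥ d` and the identity for `r < d`. -/
noncomputable def stdFreeGaugeWitt (p : ℕ) [hp : Fact p.Prime] (k : Type) [Field k] [CharP k p]
    (d : ℤ) : GaugeData (WittVector p k) p where
  M _ := WittVector p k
  f r := if d ≤ r then LinearMap.id else (p : WittVector p k) • LinearMap.id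
  v r := if r + 1 ≤ d then LinearMap.id else (p : WittVector p k) • LinearMap.id
  fv := by
    intro r x
    try dsimp only
    split_ifs
    · exfalso; omega
    · simp
    · simp
    · exfalso; omega
  vf := by
    intro r x
    try dsimp only
    split_ifs
    · exfalso; omega
    · simp
    · simp
    · exfalso; omega

/-- A gauge over `W = W(k)` is free if it is isomorphic to a finite direct sum of standard
free gauges. -/
def GaugeData.IsFreeWitt {p : ℕ} [hp : Fact p.Prime] {k : Type} [Field k] [CharP k p]
    (G : GaugeData (WittVector p k) p) : Prop :=
  ∃ (n : ℕ) (d : Fin n → ℤ), G.IsoTo (gaugeDirectSum fun i => stdFreeGaugeWitt p k (d i))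

/-- A virtual crystal over a perfect field `k`; `σB` denotes the automorphism of the
fraction field `B` of `W(k)` induced by the Witt-vector Frobenius. -/
structure VirtualCrystal (p : ℕ) [Fact p.Prime] (k : Type) [Field k] [CharP k p]
    [PerfectRing k p]
    (σB : FractionRing (WittVector p k) ≃+* FractionRing (WittVector p k)) where
  D : Type
  [acg : AddCommGroup D]
  [modB : Module (FractionRing (WittVector p k)) D]
  [modW : Module (WittVector p k) D]
  [tower : IsScalarTower (WittVector p k) (FractionRing (WittVector p k)) D]
  [finB : Module.Finite (FractionRing (WittVector p k)) D]
  phi : D → D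
  phi_add : ∀ x y, phi (x + y) = phi x + phi y
  phi_bij : Function.Bijective phi
  phi_semi : ∀ (c : FractionRing (WittVector p k)) (x : D), phi (c • x) = σB c • phi x
  L : Submodule (WittVector p k) D
  L_fg : L.FG
  L_span : Submodule.span (FractionRing (WittVector p k)) (L : Set D) = ⊤

attribute [instance] VirtualCrystal.acg VirtualCrystal.modB VirtualCrystal.modW
  VirtualCrystal.tower VirtualCrystal.finB

/-!
A free gauge `⊕ᵢ std(dᵢ)` is concentrated in `[a, b]` only if all `a ≤ dᵢ ≤ b`, and the
gauge of a virtual crystal `(D, ϕ, L)` is such a sum as soon as `L` has two `W`-bases `(gᵢ)` and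
`(hᵢ)` with `ϕ gᵢ = p^{dᵢ} hᵢ`: comparing coefficients in the basis `h`, an element `∑ wᵢ gᵢ`
lies in `L^r` iff `p^{max(r - dᵢ, 0)} ∣ wᵢ` for all `i`, so `L^r` has basis `p^{max(r - dᵢ, 0)} gᵢ`.

When `p^b L ⊆ ϕ(L) ⊆ p^a L`, such bases exist: the elementary divisor theorem over the discrete
valuation ring `W`, applied to `p^{b-a} L ⊆ p^{-a} ϕ(L) ⊆ L`, gives a basis `(hᵢ)` of `L` and
exponents `eᵢ` with `(p^{eᵢ} hᵢ)` a basis of `p^{-a} ϕ(L)`; take `gᵢ = ϕ⁻¹(p^{a + eᵢ} hᵢ)`.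
Conversely, a free φ-gauge `⊕ᵢ std(dᵢ)` with Frobenius `φ : W^n → W^n` comes from the crystal
`D = B^n`, `L = W^n`, `ϕ = φ ∘ diag(p^{dᵢ})`, for which `gᵢ = eᵢ` and `hᵢ = φ(eᵢ)`.
-/

attribute [local instance] RingHomInvPair.of_ringEquiv RingHomInvPair.of_ringEquiv_symm

namespace GaugeData

variable {G G' G'' : GaugeData R p}

theorem IsoTo.symm (hG : G.IsoTo G') : G'.IsoTo G := by
  obtain ⟨e, hf, hv⟩ := hG
  refine ⟨fun r => (e r).symm, fun r x => ?_, fun r x => ?_⟩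
  · rw [LinearEquiv.symm_apply_eq, hf, LinearEquiv.apply_symm_apply]
  · rw [LinearEquiv.symm_apply_eq, hv, LinearEquiv.apply_symm_apply]

theorem IsoTo.trans (hG : G.IsoTo G') (hG' : G'.IsoTo G'') : G.IsoTo G'' := by
  obtain ⟨e, hf, hv⟩ := hG
  obtain ⟨e', hf', hv'⟩ := hG'
  exact ⟨fun r => (e r).trans (e' r), fun r x => by simp [hf, hf'], fun r x => by simp [hv, hv']⟩

theorem IsoTo.concentratedIn (hG : G.IsoTo G') {a b : ℤ} (hc : G.ConcentratedIn a b) :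
    G'.ConcentratedIn a b := by
  obtain ⟨e, hf, hv⟩ := hG
  have hv' : ∀ r, ⇑(G'.v r) = e r ∘ G.v r ∘ (e (r + 1)).symm := fun r => by
    ext x; simp [hv]
  have hf' : ∀ r, ⇑(G'.f r) = e (r + 1) ∘ G.f r ∘ (e r).symm := fun r => by
    ext x; simp [hf]
  refine ⟨fun r hr => ?_, fun r hr => ?_⟩
  · rw [hv']
    exact (e r).bijective.comp ((hc.1 r hr).comp (e (r + 1)).symm.bijective)
  · rw [hf']
    exact (e (r + 1)).bijective.comp ((hc.2 r hr).comp (e r).symm.bijective)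

end GaugeData

theorem pow_toNat_sub_mul_ite_le {M : Type*} [CommMonoid M] (x y : M) (d r : ℤ) :
    x ^ (r + 1 - d).toNat * (if d ≤ r then y else x * y) = x * (x ^ (r - d).toNat * y) := by
  split_ifs with h
  · rw [show (r + 1 - d).toNat = (r - d).toNat + 1 by omega, pow_succ, mul_comm _ x, mul_assoc]
  · rw [show (r + 1 - d).toNat = 0 by omega, show (r - d).toNat = 0 by omega, pow_zero, one_mul,
      one_mul]

theorem pow_toNat_sub_mul_ite_lt {M : Type*} [CommMonoid M] (x y : M) (d r : ℤ) :
    x ^ (r - d).toNat * (if r + 1 ≤ d then y else x * y) = x ^ (r + 1 - d).toNat * y := by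
  split_ifs with h
  · rw [show (r + 1 - d).toNat = 0 by omega, show (r - d).toNat = 0 by omega]
  · rw [show (r + 1 - d).toNat = (r - d).toNat + 1 by omega, pow_succ, mul_assoc]

theorem LinearIndependent.sum_smul_mem_span_iff {R K V ι : Type*} [CommRing R] [CommRing K]
    [Algebra R K] [IsFractionRing R K] [AddCommGroup V] [Module R V] [Module K V]
    [IsScalarTower R K V] [Fintype ι] {v : ι → V} (hv : LinearIndependent R v) (c : ι → K) :
    ∑ i, c i • v i ∈ Submodule.span R (Set.range v) ↔ ∀ i, c i ∈ (algebraMap R K).range := by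
  constructor
  · intro hc
    obtain ⟨w, hw⟩ := (Submodule.mem_span_range_iff_exists_fun R).mp hc
    have hvK := (LinearIndependent.iff_fractionRing R K).mp hv
    have := Fintype.linearIndependent_iff.mp hvK (fun i => algebraMap R K (w i) - c i)
      (by simp only [sub_smul, Finset.sum_sub_distrib, algebraMap_smul, hw, sub_self])
    exact fun i => ⟨w i, sub_eq_zero.mp (this i)⟩
  · intro hc
    choose w hw using hc
    simp_rw [← hw, algebraMap_smul]
    exact (Submodule.mem_span_range_iff_exists_fun R).mpr ⟨w, rfl⟩

theorem zpow_mul_algebraMap_mem_range_iff {R K : Type*} [CommRing R] [IsDomain R] [Field K]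
    [Algebra R K] [IsFractionRing R K] {ϖ : R} (hϖ : ϖ ≠ 0) (m : ℤ) (x : R) :
    algebraMap R K ϖ ^ m * algebraMap R K x ∈ (algebraMap R K).range ↔ ϖ ^ (-m).toNat ∣ x := by
  have hϖK : algebraMap R K ϖ ≠ 0 :=
    IsFractionRing.to_map_ne_zero_of_mem_nonZeroDivisors (mem_nonZeroDivisors_of_ne_zero hϖ)
  obtain ⟨n, rfl | rfl⟩ := Int.eq_nat_or_neg m
  · simp only [zpow_natCast, show (-(n : ℤ)).toNat = 0 by omega, pow_zero, one_dvd, iff_true]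
    exact ⟨ϖ ^ n * x, by simp⟩
  · simp only [neg_neg, Int.toNat_natCast, zpow_neg, zpow_natCast, RingHom.mem_range]
    constructor
    · rintro ⟨y, hy⟩
      refine ⟨y, IsFractionRing.injective R K ?_⟩
      rw [map_mul, hy, map_pow, mul_inv_cancel_left₀ (pow_ne_zero _ hϖK)]
    · rintro ⟨y, rfl⟩
      exact ⟨y, by rw [map_mul, map_pow, inv_mul_cancel_left₀ (pow_ne_zero _ hϖK)]⟩

theorem Submodule.exists_linearIndependent_span_pow_smul_eq {R M : Type*} [CommRing R]
    [IsDomain R] [IsDiscreteValuationRing R] [AddCommGroup M] [Module R M] {ϖ : R}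
    (hϖ : Irreducible ϖ) {L N : Submodule R M} [Module.Free R L] [Module.Finite R L]
    (hNL : N ≤ L) (c : ℕ) (hLN : ∀ x ∈ L, ϖ ^ c • x ∈ N) :
    ∃ (n : ℕ) (h : Fin n → M) (m : Fin n → ℕ), LinearIndependent R h ∧
      Submodule.span R (Set.range h) = L ∧
      Submodule.span R (Set.range fun j => ϖ ^ m j • h j) = N := by
  obtain ⟨n, snf⟩ := (N.comap L.subtype).smithNormalForm (Module.Free.chooseBasis R L)
  have hbij : Function.Bijective snf.f := by
    refine ⟨snf.f.injective, fun i => ?_⟩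
    by_contra hi
    have h0 := snf.repr_eq_zero_of_notMem_range ⟨ϖ ^ c • snf.bM i, hLN _ (snf.bM i).2⟩
      (by simpa using hi)
    simp only [map_smul, Module.Basis.repr_self, Finsupp.smul_single, smul_eq_mul, mul_one,
      Finsupp.single_eq_same] at h0
    exact pow_ne_zero c hϖ.ne_zero h0
  have hne : ∀ j, snf.a j ≠ 0 := fun j ha =>
    snf.bN.ne_zero j (Subtype.ext (by rw [snf.snf, ha, zero_smul]; rfl))
  choose m u hu using fun j => IsDiscreteValuationRing.eq_unit_mul_pow_irreducible (hne j) hϖ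
  let bL := (snf.bM.reindex (Equiv.ofBijective snf.f hbij).symm).unitsSMul u
  have hbN : ∀ j, ϖ ^ m j • (bL j : M) = ((snf.bN j : L) : M) := fun j => by
    rw [snf.snf, hu, Module.Basis.unitsSMul_apply, Module.Basis.reindex_apply, Equiv.symm_symm,
      Equiv.ofBijective_apply, Units.smul_def, Submodule.coe_smul, Submodule.coe_smul, smul_smul,
      mul_comm]
  refine ⟨n, fun j => (bL j : M), m, bL.linearIndependent.map' L.subtype L.ker_subtype, ?_, ?_⟩
  · rw [show (fun j => (bL j : M)) = L.subtype ∘ bL from rfl, Set.range_comp,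
      Submodule.span_image, bL.span_eq, Submodule.map_top, Submodule.range_subtype]
  · simp_rw [hbN]
    rw [show (fun j => ((snf.bN j : L) : M)) =
        L.subtype ∘ (N.comap L.subtype).subtype ∘ snf.bN from rfl,
      Set.range_comp, Set.range_comp, Submodule.span_image, Submodule.span_image, snf.bN.span_eq,
      Submodule.map_top, Submodule.range_subtype, Submodule.map_comap_subtype,
      inf_eq_right.mpr hNL]

section StdFree

variable {p : ℕ} [Fact p.Prime] {k : Type} [Field k] [CharP k p] {ι : Type} [Fintype ι]

theorem gaugeDirectSum_stdFreeGaugeWitt_f (d : ι → ℤ) (r : ℤ) (y : ι → WittVector p k) :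
    (gaugeDirectSum fun i => stdFreeGaugeWitt p k (d i)).f r y =
      fun i => if d i ≤ r then y i else p * y i := by
  funext i
  show (if d i ≤ r then LinearMap.id else (p : WittVector p k) • LinearMap.id :
    WittVector p k →ₗ[WittVector p k] WittVector p k) (y i) = _
  split_ifs <;> rfl

theorem gaugeDirectSum_stdFreeGaugeWitt_v (d : ι → ℤ) (r : ℤ) (y : ι → WittVector p k) :
    (gaugeDirectSum fun i => stdFreeGaugeWitt p k (d i)).v r y =
      fun i => if r + 1 ≤ d i then y i else p * y i := by
  funext i
  show (if r + 1 ≤ d i then LinearMap.id else (p : WittVector p k) • LinearMap.id :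
    WittVector p k →ₗ[WittVector p k] WittVector p k) (y i) = _
  split_ifs <;> rfl

theorem GaugeData.IsoTo.exists_linearEquiv_pi {G : GaugeData (WittVector p k) p} {d : ι → ℤ}
    (hG : G.IsoTo (gaugeDirectSum fun i => stdFreeGaugeWitt p k (d i))) :
    ∃ e : ∀ r, G.M r ≃ₗ[WittVector p k] (ι → WittVector p k),
      (∀ r x, e (r + 1) (G.f r x) = fun i => if d i ≤ r then e r x i else p * e r x i) ∧
      (∀ r x, e r (G.v r x) =
        fun i => if r + 1 ≤ d i then e (r + 1) x i else p * e (r + 1) x i) := by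
  obtain ⟨e, hf, hv⟩ := hG
  exact ⟨e, fun r x => (hf r x).trans (gaugeDirectSum_stdFreeGaugeWitt_f d r _),
    fun r x => (hv r x).trans (gaugeDirectSum_stdFreeGaugeWitt_v d r _)⟩

theorem le_of_concentratedIn_gaugeDirectSum {d : ι → ℤ} {a b : ℤ}
    (hc : (gaugeDirectSum fun i => stdFreeGaugeWitt p k (d i)).ConcentratedIn a b) (i : ι) :
    a ≤ d i ∧ d i ≤ b := by
  classical
  have hp : ¬IsUnit (p : WittVector p k) := (WittVector.irreducible p).not_isUnit
  constructor
  · by_contra! hi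
    obtain ⟨y, hy⟩ : ∃ y : ι → WittVector p k,
        (gaugeDirectSum fun i => stdFreeGaugeWitt p k (d i)).v (a - 1) y =
          (Pi.single i 1 : ι → WittVector p k) :=
      (hc.1 (a - 1) (by omega)).2 _
    rw [gaugeDirectSum_stdFreeGaugeWitt_v] at hy
    have hyi : (if a - 1 + 1 ≤ d i then y i else p * y i) = 1 := by
      simpa using congrFun hy i
    rw [if_neg (by omega)] at hyi
    exact hp (IsUnit.of_mul_eq_one _ hyi)
  · by_contra! hi
    obtain ⟨y, hy⟩ : ∃ y : ι → WittVector p k,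
        (gaugeDirectSum fun i => stdFreeGaugeWitt p k (d i)).f b y =
          (Pi.single i 1 : ι → WittVector p k) :=
      (hc.2 b le_rfl).2 _
    rw [gaugeDirectSum_stdFreeGaugeWitt_f] at hy
    have hyi : (if d i ≤ b then y i else p * y i) = 1 := by
      simpa using congrFun hy i
    rw [if_neg (by omega)] at hyi
    exact hp (IsUnit.of_mul_eq_one _ hyi)

end StdFree

section AdaptedMap

variable {p : ℕ} [Fact p.Prime] {k : Type} [CommRing k] {D : Type} [AddCommGroup D]
  [Module (WittVector p k) D] {ι : Type} [Fintype ι]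

variable (p k) in
noncomputable def adaptedMap (d : ι → ℤ) (g : ι → D) (r : ℤ) :
    (ι → WittVector p k) →ₗ[WittVector p k] D where
  toFun x := ∑ i, ((p : WittVector p k) ^ (r - d i).toNat * x i) • g i
  map_add' x y := by simp only [Pi.add_apply, mul_add, add_smul, Finset.sum_add_distrib]
  map_smul' c x := by
    simp only [Pi.smul_apply, smul_eq_mul, RingHom.id_apply, Finset.smul_sum, smul_smul,
      mul_left_comm]

theorem adaptedMap_apply (d : ι → ℤ) (g : ι → D) (r : ℤ) (x : ι → WittVector p k) :
    adaptedMap p k d g r x = ∑ i, ((p : WittVector p k) ^ (r - d i).toNat * x i) • g i :=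
  rfl

theorem adaptedMap_succ_ite (d : ι → ℤ) (g : ι → D) (r : ℤ) (x : ι → WittVector p k) :
    adaptedMap p k d g (r + 1) (fun i => if d i ≤ r then x i else p * x i) =
      (p : WittVector p k) • adaptedMap p k d g r x := by
  simp only [adaptedMap_apply, Finset.smul_sum, smul_smul, pow_toNat_sub_mul_ite_le]

theorem adaptedMap_ite_succ (d : ι → ℤ) (g : ι → D) (r : ℤ) (x : ι → WittVector p k) :
    adaptedMap p k d g r (fun i => if r + 1 ≤ d i then x i else p * x i) =
      adaptedMap p k d g (r + 1) x := by
  simp only [adaptedMap_apply, pow_toNat_sub_mul_ite_lt]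

end AdaptedMap

theorem natCast_pow_smul_eq_zpow_smul {p : ℕ} [Fact p.Prime] {k : Type} [Field k] [CharP k p]
    {D : Type} [AddCommGroup D] [Module (FractionRing (WittVector p k)) D]
    [Module (WittVector p k) D] [IsScalarTower (WittVector p k) (FractionRing (WittVector p k)) D]
    (n : ℕ) (x : D) :
    (p : WittVector p k) ^ n • x = (p : FractionRing (WittVector p k)) ^ (n : ℤ) • x := by
  rw [← algebraMap_smul (FractionRing (WittVector p k)), map_pow, map_natCast, zpow_natCast]

section Adapted

variable {p : ℕ} [Fact p.Prime] {k : Type} [Field k] [CharP k p] [PerfectRing k p]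
  {D : Type} [AddCommGroup D] [Module (FractionRing (WittVector p k)) D]
  [Module (WittVector p k) D]

variable (p k) in
structure AdaptedBases
    (Φ : D →ₛₗ[(WittVector.frobeniusEquiv p k : WittVector p k →+* WittVector p k)] D)
    (L : Submodule (WittVector p k) D) {ι : Type} (d : ι → ℤ) (g h : ι → D) : Prop where
  span_g : Submodule.span (WittVector p k) (Set.range g) = L
  linearIndependent_h : LinearIndependent (WittVector p k) h
  span_h : Submodule.span (WittVector p k) (Set.range h) = L
  map_g : ∀ i, Φ (g i) = (p : FractionRing (WittVector p k)) ^ d i • h i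

theorem AdaptedBases.adaptedMap_mem
    {Φ : D →ₛₗ[(WittVector.frobeniusEquiv p k : WittVector p k →+* WittVector p k)] D}
    {L : Submodule (WittVector p k) D} {ι : Type} [Fintype ι] {d : ι → ℤ} {g h : ι → D}
    (hA : AdaptedBases p k Φ L d g h) (r : ℤ) (x : ι → WittVector p k) :
    adaptedMap p k d g r x ∈ L :=
  hA.span_g ▸ Submodule.sum_mem _ fun i _ => Submodule.smul_mem _ _ (Submodule.subset_span ⟨i, rfl⟩)

variable [IsScalarTower (WittVector p k) (FractionRing (WittVector p k)) D]

variable (p k) in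
def phiSemilinear {ϕ : D → D}
    {σB : FractionRing (WittVector p k) ≃+* FractionRing (WittVector p k)}
    (hσB : ∀ w : WittVector p k,
      σB (algebraMap (WittVector p k) (FractionRing (WittVector p k)) w) =
        algebraMap (WittVector p k) (FractionRing (WittVector p k))
          (WittVector.frobeniusEquiv p k w))
    (hadd : ∀ x y : D, ϕ (x + y) = ϕ x + ϕ y)
    (hsemi : ∀ (c : FractionRing (WittVector p k)) (x : D), ϕ (c • x) = σB c • ϕ x) :
    D →ₛₗ[(WittVector.frobeniusEquiv p k : WittVector p k →+* WittVector p k)] D where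
  toFun := ϕ
  map_add' := hadd
  map_smul' w x := by
    rw [← algebraMap_smul (FractionRing (WittVector p k)) w x, hsemi, hσB, algebraMap_smul]
    rfl

namespace AdaptedBases

variable {Φ : D →ₛₗ[(WittVector.frobeniusEquiv p k : WittVector p k →+* WittVector p k)] D}
  {L : Submodule (WittVector p k) D} {ι : Type} [Fintype ι] {d : ι → ℤ} {g h : ι → D}

theorem map_sum_smul (hA : AdaptedBases p k Φ L d g h) (w : ι → WittVector p k) :
    Φ (∑ i, w i • g i) = ∑ i, (algebraMap (WittVector p k) (FractionRing (WittVector p k))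
      (WittVector.frobeniusEquiv p k (w i)) * (p : FractionRing (WittVector p k)) ^ d i) • h i := by
  simp only [map_sum, map_smulₛₗ, hA.map_g, mul_smul, algebraMap_smul]
  rfl

theorem linearIndependent_g (hA : AdaptedBases p k Φ L d g h) :
    LinearIndependent (WittVector p k) g := by
  refine Fintype.linearIndependent_iff.mpr fun w hw i => ?_
  have hΦ := hA.map_sum_smul w
  rw [hw, map_zero, eq_comm] at hΦ
  have hi := Fintype.linearIndependent_iff.mp
    ((LinearIndependent.iff_fractionRing _ (FractionRing (WittVector p k))).mp
      hA.linearIndependent_h) _ hΦ i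
  rwa [mul_eq_zero, or_iff_left (zpow_ne_zero _ (WittVector.FractionRing.p_nonzero p k)),
    map_eq_zero_iff _ (IsFractionRing.injective _ _), map_eq_zero_iff _ (RingEquiv.injective _)]
    at hi

theorem map_sum_smul_mem_iff (hA : AdaptedBases p k Φ L d g h) (w : ι → WittVector p k)
    (r : ℤ) :
    Φ (∑ i, w i • g i) ∈ (p : FractionRing (WittVector p k)) ^ r • (L : Set D) ↔
      ∀ i, (p : WittVector p k) ^ (r - d i).toNat ∣ w i := by
  have hp := WittVector.FractionRing.p_nonzero p k
  rw [Set.mem_smul_set_iff_inv_smul_mem₀ (zpow_ne_zero _ hp), hA.map_sum_smul, Finset.smul_sum,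
    SetLike.mem_coe, ← hA.span_h]
  simp_rw [smul_smul]
  rw [hA.linearIndependent_h.sum_smul_mem_span_iff]
  refine forall_congr' fun i => ?_
  -- The `i`-th coefficient is `p^{dᵢ - r} σ(wᵢ)`, and `σ` fixes `p`.
  have hcoeff : ((p : FractionRing (WittVector p k)) ^ r)⁻¹ *
      (algebraMap (WittVector p k) (FractionRing (WittVector p k))
        (WittVector.frobeniusEquiv p k (w i)) * (p : FractionRing (WittVector p k)) ^ d i) =
      algebraMap (WittVector p k) (FractionRing (WittVector p k)) p ^ (d i - r) *
        algebraMap (WittVector p k) (FractionRing (WittVector p k))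
          (WittVector.frobeniusEquiv p k (w i)) := by
    rw [map_natCast, zpow_sub₀ hp, div_eq_mul_inv]
    ring
  rw [hcoeff, zpow_mul_algebraMap_mem_range_iff (WittVector.p_nonzero p k), neg_sub]
  simpa only [map_pow, map_natCast] using
    map_dvd_iff (WittVector.frobeniusEquiv p k) (a := (p : WittVector p k) ^ (r - d i).toNat)

theorem map_adaptedMap_of_le (hA : AdaptedBases p k Φ L d g h) {b : ℤ} (hdb : ∀ i, d i ≤ b)
    (x : ι → WittVector p k) :
    Φ (adaptedMap p k d g b x) =
      (p : FractionRing (WittVector p k)) ^ b • ∑ i, WittVector.frobeniusEquiv p k (x i) • h i := by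
  rw [adaptedMap_apply, hA.map_sum_smul, Finset.smul_sum]
  refine Finset.sum_congr rfl fun i _ => ?_
  rw [← algebraMap_smul (FractionRing (WittVector p k)) (WittVector.frobeniusEquiv p k (x i)),
    smul_smul]
  congr 1
  rw [map_mul, map_pow, map_natCast, map_mul, map_pow, map_natCast, mul_right_comm, mul_comm,
    ← zpow_natCast, ← zpow_add₀ (WittVector.FractionRing.p_nonzero p k),
    Int.toNat_of_nonneg (sub_nonneg.mpr (hdb i)), sub_add_cancel, mul_comm]

theorem image_subset_zpow_smul (hA : AdaptedBases p k Φ L d g h) {a : ℤ} (hda : ∀ i, a ≤ d i) :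
    Φ '' (L : Set D) ⊆ (p : FractionRing (WittVector p k)) ^ a • (L : Set D) := by
  rintro _ ⟨x, hx, rfl⟩
  rw [SetLike.mem_coe, ← hA.span_g] at hx
  obtain ⟨w, rfl⟩ := (Submodule.mem_span_range_iff_exists_fun _).mp hx
  exact (hA.map_sum_smul_mem_iff w a).mpr fun i => by
    simp [Int.toNat_eq_zero.mpr (sub_nonpos.mpr (hda i))]

theorem zpow_smul_subset_image (hA : AdaptedBases p k Φ L d g h) {b : ℤ} (hdb : ∀ i, d i ≤ b) :
    (p : FractionRing (WittVector p k)) ^ b • (L : Set D) ⊆ Φ '' (L : Set D) := by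
  rintro _ ⟨y, hy, rfl⟩
  rw [SetLike.mem_coe, ← hA.span_h] at hy
  obtain ⟨w, rfl⟩ := (Submodule.mem_span_range_iff_exists_fun _).mp hy
  refine ⟨adaptedMap p k d g b fun i => (WittVector.frobeniusEquiv p k).symm (w i),
    hA.adaptedMap_mem _ _, ?_⟩
  simp only [hA.map_adaptedMap_of_le hdb, RingEquiv.apply_symm_apply]

end AdaptedBases

end Adapted

section CrystalGauge

variable {p : ℕ} [Fact p.Prime] {k : Type} [Field k] [CharP k p] [PerfectRing k p]
  {D : Type} [AddCommGroup D] [Module (FractionRing (WittVector p k)) D]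
  [Module (WittVector p k) D] [IsScalarTower (WittVector p k) (FractionRing (WittVector p k)) D]
  {ϕ : D → D} {σB : FractionRing (WittVector p k) ≃+* FractionRing (WittVector p k)}
  {hσB : ∀ w : WittVector p k,
      σB (algebraMap (WittVector p k) (FractionRing (WittVector p k)) w) =
        algebraMap (WittVector p k) (FractionRing (WittVector p k))
          (WittVector.frobeniusEquiv p k w)}
  {hadd : ∀ x y : D, ϕ (x + y) = ϕ x + ϕ y}
  {hsemi : ∀ (c : FractionRing (WittVector p k)) (x : D), ϕ (c • x) = σB c • ϕ x}
  {L : Submodule (WittVector p k) D}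

theorem GaugeData.isoTo_crystalGauge {G : GaugeData (WittVector p k) p}
    (e : ∀ r, G.M r ≃ₗ[WittVector p k] crystalComponent p k D ϕ L σB hσB hadd hsemi r)
    (hf : ∀ r x, (e (r + 1) (G.f r x) : D) = (p : WittVector p k) • (e r x : D))
    (hv : ∀ r x, (e r (G.v r x) : D) = e (r + 1) x) :
    G.IsoTo (crystalGauge p k D ϕ L σB hσB hadd hsemi) :=
  ⟨e, fun r x => Subtype.ext (hf r x), fun r x => Subtype.ext (hv r x)⟩

namespace AdaptedBases

variable {ι : Type} [Fintype ι] {d : ι → ℤ} {g h : ι → D}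

theorem adaptedMap_mem_crystalComponent
    (hA : AdaptedBases p k (phiSemilinear p k hσB hadd hsemi) L d g h) (r : ℤ)
    (x : ι → WittVector p k) :
    adaptedMap p k d g r x ∈ crystalComponent p k D ϕ L σB hσB hadd hsemi r :=
  ⟨hA.adaptedMap_mem r x, (hA.map_sum_smul_mem_iff _ r).mpr fun _ => dvd_mul_right _ _⟩

theorem bijective_codRestrict_adaptedMap
    (hA : AdaptedBases p k (phiSemilinear p k hσB hadd hsemi) L d g h) (r : ℤ) :
    Function.Bijective ((adaptedMap p k d g r).codRestrict _
      (hA.adaptedMap_mem_crystalComponent r)) := by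
  refine ⟨fun x y hxy => funext fun i => ?_, fun ⟨y, hyL, hyϕ⟩ => ?_⟩
  · exact mul_left_cancel₀ (pow_ne_zero _ (WittVector.p_nonzero p k))
      (Fintype.linearIndependent_iffₛ.mp hA.linearIndependent_g _ _ (congrArg Subtype.val hxy) i)
  · rw [← hA.span_g] at hyL
    obtain ⟨w, rfl⟩ := (Submodule.mem_span_range_iff_exists_fun _).mp hyL
    choose x hx using (hA.map_sum_smul_mem_iff w r).mp hyϕ
    exact ⟨x, Subtype.ext (by simp_rw [LinearMap.codRestrict_apply, adaptedMap_apply, hx])⟩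

noncomputable def adaptedEquiv
    (hA : AdaptedBases p k (phiSemilinear p k hσB hadd hsemi) L d g h) (r : ℤ) :
    (ι → WittVector p k) ≃ₗ[WittVector p k] crystalComponent p k D ϕ L σB hσB hadd hsemi r :=
  LinearEquiv.ofBijective _ (hA.bijective_codRestrict_adaptedMap r)

theorem coe_adaptedEquiv_apply
    (hA : AdaptedBases p k (phiSemilinear p k hσB hadd hsemi) L d g h) (r : ℤ)
    (x : ι → WittVector p k) : (hA.adaptedEquiv r x : D) = adaptedMap p k d g r x :=
  rfl

theorem isoTo_crystalGauge (hA : AdaptedBases p k (phiSemilinear p k hσB hadd hsemi) L d g h) :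
    (gaugeDirectSum fun i => stdFreeGaugeWitt p k (d i)).IsoTo
      (crystalGauge p k D ϕ L σB hσB hadd hsemi) := by
  refine ⟨hA.adaptedEquiv, fun r (x : ι → WittVector p k) => Subtype.ext ?_,
    fun r (x : ι → WittVector p k) => Subtype.ext ?_⟩
  · show adaptedMap p k d g (r + 1) ((gaugeDirectSum fun i => stdFreeGaugeWitt p k (d i)).f r x) =
      (p : WittVector p k) • adaptedMap p k d g r x
    rw [gaugeDirectSum_stdFreeGaugeWitt_f, adaptedMap_succ_ite]
  · show adaptedMap p k d g r ((gaugeDirectSum fun i => stdFreeGaugeWitt p k (d i)).v r x) =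
      adaptedMap p k d g (r + 1) x
    rw [gaugeDirectSum_stdFreeGaugeWitt_v, adaptedMap_ite_succ]

theorem coe_trans_adaptedEquiv_f
    (hA : AdaptedBases p k (phiSemilinear p k hσB hadd hsemi) L d g h)
    {G : GaugeData (WittVector p k) p} (e : ∀ r, G.M r ≃ₗ[WittVector p k] (ι → WittVector p k))
    (hf : ∀ r x, e (r + 1) (G.f r x) = fun i => if d i ≤ r then e r x i else p * e r x i)
    (r : ℤ) (x : G.M r) :
    (((e (r + 1)).trans (hA.adaptedEquiv (r + 1))) (G.f r x) : D) =
      (p : WittVector p k) • (((e r).trans (hA.adaptedEquiv r)) x : D) := by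
  simp only [LinearEquiv.trans_apply, coe_adaptedEquiv_apply, hf, adaptedMap_succ_ite]

theorem coe_trans_adaptedEquiv_v
    (hA : AdaptedBases p k (phiSemilinear p k hσB hadd hsemi) L d g h)
    {G : GaugeData (WittVector p k) p} (e : ∀ r, G.M r ≃ₗ[WittVector p k] (ι → WittVector p k))
    (hv : ∀ r x, e r (G.v r x) =
      fun i => if r + 1 ≤ d i then e (r + 1) x i else p * e (r + 1) x i)
    (r : ℤ) (x : G.M (r + 1)) :
    (((e r).trans (hA.adaptedEquiv r)) (G.v r x) : D) =
      (((e (r + 1)).trans (hA.adaptedEquiv (r + 1))) x : D) := by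
  simp only [LinearEquiv.trans_apply, coe_adaptedEquiv_apply, hv, adaptedMap_ite_succ]

end AdaptedBases

end CrystalGauge

section FreeLattice

variable {p : ℕ} [Fact p.Prime] {k : Type} [CommRing k] {ι : Type}

variable (p k ι) in
noncomputable def latticeEmbedding :
    (ι → WittVector p k) →ₗ[WittVector p k] (ι → FractionRing (WittVector p k)) :=
  (Algebra.linearMap (WittVector p k) (FractionRing (WittVector p k))).compLeft ι

theorem latticeEmbedding_apply (x : ι → WittVector p k) (i : ι) :
    latticeEmbedding p k ι x i =
      algebraMap (WittVector p k) (FractionRing (WittVector p k)) (x i) :=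
  rfl

theorem latticeEmbedding_injective : Function.Injective (latticeEmbedding p k ι) :=
  fun _ _ hxy => funext fun i => IsFractionRing.injective _ _ (congrFun hxy i)

theorem sum_smul_latticeEmbedding_basisFun [Fintype ι] [DecidableEq ι] (z : ι → WittVector p k) :
    ∑ i, z i • latticeEmbedding p k ι (Pi.basisFun _ ι i) = latticeEmbedding p k ι z := by
  ext j
  simp [latticeEmbedding_apply, Pi.single_apply, Algebra.smul_def]

variable (p k ι) in
noncomputable def freeLattice [Finite ι] :
    Submodule (WittVector p k) (ι → FractionRing (WittVector p k)) :=
  Submodule.span (WittVector p k) (Set.range (latticeEmbedding p k ι ∘ Pi.basisFun _ ι))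

end FreeLattice

section FreeCrystal

variable {p : ℕ} [Fact p.Prime] {k : Type} [Field k] [CharP k p] [PerfectRing k p]
  {ι : Type} [Fintype ι]

variable (φ : (ι → WittVector p k)
  ≃ₛₗ[(WittVector.frobeniusEquiv p k : WittVector p k →+* WittVector p k)] (ι → WittVector p k))

theorem linearIndependent_latticeEmbedding_comp_basisFun :
    LinearIndependent (WittVector p k)
      (latticeEmbedding p k ι ∘ φ ∘ Pi.basisFun (WittVector p k) ι) := by
  refine LinearIndependent.map' ?_ _ (LinearMap.ker_eq_bot.mpr latticeEmbedding_injective)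
  exact (Pi.basisFun _ ι).linearIndependent.map_of_injective_injectiveₛ _ φ.toAddMonoidHom
    (WittVector.frobeniusEquiv p k).symm.injective φ.injective fun r m => by
      show φ _ = _
      rw [map_smulₛₗ]
      exact congrArg (· • φ m) ((WittVector.frobeniusEquiv p k).apply_symm_apply r)

variable (σB : FractionRing (WittVector p k) ≃+* FractionRing (WittVector p k)) (d : ι → ℤ)

noncomputable def freePhi (y : ι → FractionRing (WittVector p k)) :
    ι → FractionRing (WittVector p k) :=
  Fintype.linearCombination (FractionRing (WittVector p k))
    (latticeEmbedding p k ι ∘ φ ∘ Pi.basisFun (WittVector p k) ι)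
    fun i => σB (y i) * (p : FractionRing (WittVector p k)) ^ d i

theorem freePhi_add (x y : ι → FractionRing (WittVector p k)) :
    freePhi φ σB d (x + y) = freePhi φ σB d x + freePhi φ σB d y := by
  simp only [freePhi, Pi.add_apply, map_add, add_mul]
  exact map_add (Fintype.linearCombination _ _) _ _

theorem freePhi_smul (c : FractionRing (WittVector p k)) (x : ι → FractionRing (WittVector p k)) :
    freePhi φ σB d (c • x) = σB c • freePhi φ σB d x := by
  simp only [freePhi, Pi.smul_apply, smul_eq_mul, map_mul, mul_assoc]
  exact map_smul (Fintype.linearCombination _ _) _ _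

theorem freePhi_bijective : Function.Bijective (freePhi φ σB d) := by
  have hli := (LinearIndependent.iff_fractionRing (WittVector p k)
    (FractionRing (WittVector p k))).mp (linearIndependent_latticeEmbedding_comp_basisFun φ)
  have hcoord := (Equiv.piCongrRight fun i => σB.toEquiv.trans
    (Equiv.mulRight₀ _ (zpow_ne_zero (d i) (WittVector.FractionRing.p_nonzero p k)))).bijective
  exact Function.Bijective.comp ⟨linearIndependent_iff_injective_fintypeLinearCombination.mp hli,
    (span_range_eq_top_iff_surjective_fintypeLinearCombination _ _).mp
      (hli.span_eq_top_of_card_eq_finrank' (by simp))⟩ hcoord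

noncomputable def freeCrystal : VirtualCrystal p k σB where
  D := ι → FractionRing (WittVector p k)
  phi := freePhi φ σB d
  phi_add := freePhi_add φ σB d
  phi_bij := freePhi_bijective φ σB d
  phi_semi := freePhi_smul φ σB d
  L := freeLattice p k ι
  L_fg := Submodule.fg_span (Set.finite_range _)
  L_span := by
    classical
    rw [freeLattice, Submodule.span_span_of_tower,
      ← (Pi.basisFun (FractionRing (WittVector p k)) ι).span_eq]
    congr 2
    ext i j
    simp [latticeEmbedding, Pi.single_apply, apply_ite]

theorem adaptedBases_freePhi [DecidableEq ι] (hσB : ∀ w : WittVector p k,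
      σB (algebraMap (WittVector p k) (FractionRing (WittVector p k)) w) =
        algebraMap (WittVector p k) (FractionRing (WittVector p k))
          (WittVector.frobeniusEquiv p k w)) :
    AdaptedBases p k (phiSemilinear p k hσB (freePhi_add φ σB d) (freePhi_smul φ σB d))
      (freeLattice p k ι) d (latticeEmbedding p k ι ∘ Pi.basisFun _ ι)
      (latticeEmbedding p k ι ∘ φ ∘ Pi.basisFun _ ι) where
  span_g := rfl
  linearIndependent_h := linearIndependent_latticeEmbedding_comp_basisFun φ
  span_h := by
    rw [freeLattice, Set.range_comp, Set.range_comp, Set.range_comp, ← LinearEquiv.coe_coe φ,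
      Submodule.span_image, Submodule.span_image, Submodule.span_image, Module.Basis.span_eq,
      Submodule.map_top, LinearEquiv.range]
  map_g i := by
    show freePhi φ σB d _ = _
    simp [freePhi, Fintype.linearCombination_apply, latticeEmbedding_apply, Pi.single_apply,
      apply_ite, ite_smul]

theorem freePhi_adaptedMap [DecidableEq ι] (hσB : ∀ w : WittVector p k,
      σB (algebraMap (WittVector p k) (FractionRing (WittVector p k)) w) =
        algebraMap (WittVector p k) (FractionRing (WittVector p k))
          (WittVector.frobeniusEquiv p k w))
    {a b : ℤ} (hda : ∀ i, a ≤ d i) (hdb : ∀ i, d i ≤ b)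
    (y : ι → WittVector p k) :
    freePhi φ σB d (adaptedMap p k d (latticeEmbedding p k ι ∘ Pi.basisFun _ ι) b y) =
      (p : FractionRing (WittVector p k)) ^ b •
        adaptedMap p k d (latticeEmbedding p k ι ∘ Pi.basisFun _ ι) a (φ y) := by
  refine ((adaptedBases_freePhi φ σB d hσB).map_adaptedMap_of_le hdb y).trans (congrArg _ ?_)
  have hlow : ∀ i, (a - d i).toNat = 0 := fun i => Int.toNat_eq_zero.mpr (sub_nonpos.mpr (hda i))
  simp only [adaptedMap_apply, hlow, pow_zero, one_mul, Function.comp_apply,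
    sum_smul_latticeEmbedding_basisFun]
  conv_rhs => rw [← (Pi.basisFun (WittVector p k) ι).sum_repr y]
  simp only [map_sum, map_smulₛₗ, Pi.basisFun_repr]
  rfl

end FreeCrystal

theorem VirtualCrystal.exists_adaptedBases {p : ℕ} [Fact p.Prime] {k : Type} [Field k]
    [CharP k p] [PerfectRing k p]
    {σB : FractionRing (WittVector p k) ≃+* FractionRing (WittVector p k)}
    (C : VirtualCrystal p k σB)
    (hσB : ∀ w : WittVector p k,
      σB (algebraMap (WittVector p k) (FractionRing (WittVector p k)) w) =
        algebraMap (WittVector p k) (FractionRing (WittVector p k))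
          (WittVector.frobeniusEquiv p k w))
    {a b : ℤ} (hab : a ≤ b)
    (hb : (p : FractionRing (WittVector p k)) ^ b • (C.L : Set C.D) ⊆ C.phi '' (C.L : Set C.D))
    (ha : C.phi '' (C.L : Set C.D) ⊆ (p : FractionRing (WittVector p k)) ^ a • (C.L : Set C.D)) :
    ∃ (n : ℕ) (d : Fin n → ℤ) (g h : Fin n → C.D),
      AdaptedBases p k (phiSemilinear p k hσB C.phi_add C.phi_semi) C.L d g h := by
  have hp := WittVector.FractionRing.p_nonzero p k
  have : Submodule.IsLattice (FractionRing (WittVector p k)) C.L := ⟨C.L_fg, C.L_span⟩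
  let ψ := (LinearEquiv.ofBijective (phiSemilinear p k hσB C.phi_add C.phi_semi) C.phi_bij).trans
    ((LinearEquiv.smulOfNeZero _ C.D _ (zpow_ne_zero (-a) hp)).restrictScalars (WittVector p k))
  have hψ : ∀ x, ψ x = (p : FractionRing (WittVector p k)) ^ (-a) • C.phi x := fun x => rfl
  have hNL : C.L.map ψ.toLinearMap ≤ C.L := by
    rintro _ ⟨x, hx, rfl⟩
    have := ha ⟨x, hx, rfl⟩
    rwa [Set.mem_smul_set_iff_inv_smul_mem₀ (zpow_ne_zero _ hp), ← zpow_neg, ← hψ] at this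
  have hLN : ∀ y ∈ C.L, (p : WittVector p k) ^ (b - a).toNat • y ∈ C.L.map ψ.toLinearMap := by
    intro y hy
    obtain ⟨x, hx, hxy⟩ := hb ⟨y, hy, rfl⟩
    refine ⟨x, hx, ?_⟩
    rw [LinearEquiv.coe_coe, hψ, hxy, smul_smul, ← zpow_add₀ hp, neg_add_eq_sub,
      natCast_pow_smul_eq_zpow_smul, Int.toNat_of_nonneg (sub_nonneg.mpr hab)]
  obtain ⟨n, h, m, hli, hspan, hN⟩ := Submodule.exists_linearIndependent_span_pow_smul_eq
    (WittVector.irreducible p) hNL _ hLN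
  refine ⟨n, fun j => a + m j, fun j => ψ.symm ((p : WittVector p k) ^ m j • h j), h,
    ⟨?_, hli, hspan, fun j => ?_⟩⟩
  · rw [show (fun j => ψ.symm ((p : WittVector p k) ^ m j • h j)) =
        ψ.symm.toLinearMap ∘ fun j => (p : WittVector p k) ^ m j • h j from rfl,
      Set.range_comp, Submodule.span_image, hN, ← Submodule.map_comp,
      LinearEquiv.symm_comp, Submodule.map_id]
  · apply smul_right_injective C.D (zpow_ne_zero (-a) hp)
    show ψ (ψ.symm _) = (p : FractionRing (WittVector p k)) ^ (-a) • _
    rw [LinearEquiv.apply_symm_apply, smul_smul, ← zpow_add₀ hp, neg_add_cancel_left,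
      natCast_pow_smul_eq_zpow_smul]

theorem phiGauge_comes_from_crystal_iff_free_general (p : ℕ) [hp : Fact p.Prime] (k : Type)
    [Field k] [CharP k p] [PerfectRing k p]
    (σB : FractionRing (WittVector p k) ≃+* FractionRing (WittVector p k))
    (hσB : ∀ w : WittVector p k,
      σB (algebraMap (WittVector p k) (FractionRing (WittVector p k)) w) =
        algebraMap (WittVector p k) (FractionRing (WittVector p k))
          (WittVector.frobeniusEquiv p k w))
    (G : GaugeData (WittVector p k) p) (a b : ℤ) (hab : a ≤ b)
    (hconc : G.ConcentratedIn a b)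
    (φ : G.M b → G.M a) (hφadd : ∀ x y, φ (x + y) = φ x + φ y)
    (hφbij : Function.Bijective φ)
    (hφsemi : ∀ (c : WittVector p k) (x : G.M b),
      φ (c • x) = (WittVector.frobeniusEquiv p k c) • φ x) :
    G.IsFreeWitt ↔
      ∃ C : VirtualCrystal p k σB,
        ((p : FractionRing (WittVector p k)) ^ b • (C.L : Set C.D) ⊆
          C.phi '' (C.L : Set C.D)) ∧
        (C.phi '' (C.L : Set C.D) ⊆
          (p : FractionRing (WittVector p k)) ^ a • (C.L : Set C.D)) ∧
        ∃ e : ∀ r : ℤ, G.M r ≃ₗ[WittVector p k] ↥(crystalComponent p k C.D C.phi C.L σB hσB C.phi_add C.phi_semi r),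
          (∀ (r : ℤ) (x : G.M r),
            ((e (r + 1)) (G.f r x) : C.D) = (p : WittVector p k) • ((e r x : C.D))) ∧
          (∀ (r : ℤ) (x : G.M (r + 1)), ((e r (G.v r x)) : C.D) = ((e (r + 1) x : C.D))) ∧
          (∀ x : G.M b, C.phi ((e b x : C.D)) =
            (p : FractionRing (WittVector p k)) ^ b • ((e a (φ x) : C.D))) := by
  constructor
  · rintro ⟨n, d, hG⟩
    have hd := le_of_concentratedIn_gaugeDirectSum (hG.concentratedIn hconc)
    obtain ⟨e, hf, hv⟩ := hG.exists_linearEquiv_pi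
    let φ' := (e b).symm.trans ((LinearEquiv.ofBijective (⟨⟨φ, hφadd⟩, hφsemi⟩ :
      G.M b →ₛₗ[(WittVector.frobeniusEquiv p k : WittVector p k →+* WittVector p k)] G.M a)
        hφbij).trans (e a))
    have hA := adaptedBases_freePhi φ' σB d hσB
    refine ⟨freeCrystal φ' σB d, hA.zpow_smul_subset_image fun i => (hd i).2,
      hA.image_subset_zpow_smul fun i => (hd i).1, fun r => (e r).trans (hA.adaptedEquiv r),
      hA.coe_trans_adaptedEquiv_f e hf, hA.coe_trans_adaptedEquiv_v e hv, fun x => ?_⟩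
    show freePhi φ' σB d (adaptedMap p k d _ b (e b x)) = _
    rw [freePhi_adaptedMap φ' σB d hσB (fun i => (hd i).1) fun i => (hd i).2]
    simp only [φ', LinearEquiv.trans_apply, LinearEquiv.symm_apply_apply]
    rfl
  · rintro ⟨C, hb, ha, e, hf, hv, -⟩
    obtain ⟨n, d, g, h, hA⟩ := C.exists_adaptedBases hσB hab hb ha
    exact ⟨n, d, (GaugeData.isoTo_crystalGauge e hf hv).trans hA.isoTo_crystalGauge.symm⟩

/-- A φ-gauge of finite type over `W(k)`, concentrated in `[a,b]`, comes from a virtual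
crystal over `k` (i.e. is isomorphic as a φ-gauge to the gauge associated to a virtual
crystal, with the φ-structure given by the divided Frobenius) if and only if its underlying
gauge is free. -/
theorem phiGauge_comes_from_crystal_iff_free (p : ℕ) [hp : Fact p.Prime] (k : Type)
    [Field k] [CharP k p] [PerfectRing k p]
    (σB : FractionRing (WittVector p k) ≃+* FractionRing (WittVector p k))
    (hσB : ∀ w : WittVector p k,
      σB (algebraMap (WittVector p k) (FractionRing (WittVector p k)) w) =
        algebraMap (WittVector p k) (FractionRing (WittVector p k))
          (WittVector.frobeniusEquiv p k w))
    (G : GaugeData (WittVector p k) p) (hft : G.IsFiniteType) (a b : ℤ) (hab : a ≤ b)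
    (hconc : G.ConcentratedIn a b)
    (φ : G.M b → G.M a) (hφadd : ∀ x y, φ (x + y) = φ x + φ y)
    (hφbij : Function.Bijective φ)
    (hφsemi : ∀ (c : WittVector p k) (x : G.M b),
      φ (c • x) = (WittVector.frobeniusEquiv p k c) • φ x) :
    G.IsFreeWitt ↔
      ∃ C : VirtualCrystal p k σB,
        ((p : FractionRing (WittVector p k)) ^ b • (C.L : Set C.D) ⊆
          C.phi '' (C.L : Set C.D)) ∧
        (C.phi '' (C.L : Set C.D) ⊆
          (p : FractionRing (WittVector p k)) ^ a • (C.L : Set C.D)) ∧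
        ∃ e : ∀ r : ℤ, G.M r ≃ₗ[WittVector p k] ↥(crystalComponent p k C.D C.phi C.L σB hσB C.phi_add C.phi_semi r),
          (∀ (r : ℤ) (x : G.M r),
            ((e (r + 1)) (G.f r x) : C.D) = (p : WittVector p k) • ((e r x : C.D))) ∧
          (∀ (r : ℤ) (x : G.M (r + 1)), ((e r (G.v r x)) : C.D) = ((e (r + 1) x : C.D))) ∧
          (∀ x : G.M b, C.phi ((e b x : C.D)) =
            (p : FractionRing (WittVector p k)) ^ b • ((e a (φ x) : C.D))) :=
  phiGauge_comes_from_crystal_iff_free_general p (hp := hp) k σB hσB G a b hab hconc φ hφadd hφbij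
    hφsemi
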